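/- Let σ_G > 0 and σ_L > 0, let f_G(t) = (1/(√(2π)σ_G)) exp(−t²/(2σ_G²)) be the zero-mean Gaussian density and f_L(t) = (1/(2σ_L)) exp(−|t|/σ_L) the zero-mean Laplacian density, and define erfc(x) = (2/√π) ∫ₓ^∞ e^{−t²} dt. Then for every ε ∈ ℝ, the convolution satisfies ∫_ℝ f_L(t) · f_G(ε − t) dt = (1/(4σ_L)) · exp(σ_G²/(2σ_L²)) · [ exp(−ε/σ_L) · erfc(σ_G/(√2·σ_L) − ε/(√2·σ_G)) + exp(ε/σ_L) · erfc(σ_G/(√2·σ_L) + ε/(√2·σ_G)) ]. -/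

import Mathlib

open MeasureTheory

/-- The complementary error function `erfc(x) = (2/√π) ∫ₓ^∞ e^{−t²} dt`. -/
noncomputable def erfc (x : ℝ) : ℝ :=
  (2 / Real.sqrt Real.pi) * ∫ t in Set.Ioi x, Real.exp (-t ^ 2)

/-- The zero-mean Gaussian density with standard deviation `σ_G`. -/
noncomputable def gaussianDensity (σG : ℝ) (t : ℝ) : ℝ :=
  (1 / (Real.sqrt (2 * Real.pi) * σG)) * Real.exp (-t ^ 2 / (2 * σG ^ 2))

/-- The zero-mean Laplacian density with scale `σ_L`. -/
noncomputable def laplacianDensity (σL : ℝ) (t : ℝ) : ℝ :=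
  (1 / (2 * σL)) * Real.exp (-|t| / σL)

/-! On each half-line `|t|` is linear, so completing the square turns `e^{∓t/σ_L} f_G(ε - t)`
into the constant `e^{σ_G²/(2σ_L²)} e^{∓ε/σ_L}` times a shifted Gaussian density, whose integral
over a half-line is a Gaussian tail, i.e. half an `erfc`. The half-line `t ≤ 0` reduces to
`t ≥ 0` through `t ↦ -t` and the evenness of `f_G`. -/

open Real Set

theorem setIntegral_Ioi_comp_add_right {E : Type*} [NormedAddCommGroup E] [NormedSpace ℝ E]
    (f : ℝ → E) (a d : ℝ) : ∫ x in Ioi a, f (x + d) = ∫ x in Ioi (a + d), f x := by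
  simpa using (measurePreserving_add_right volume d).setIntegral_preimage_emb
    (measurableEmbedding_addRight d) f (Ioi (a + d))

theorem integral_Ioi_exp_neg_sq (x : ℝ) : ∫ t in Ioi x, exp (-t ^ 2) = √π / 2 * erfc x := by
  rw [erfc]
  field_simp

theorem gaussianDensity_neg (s t : ℝ) : gaussianDensity s (-t) = gaussianDensity s t := by
  simp only [gaussianDensity, neg_sq]

theorem integrable_gaussianDensity {s : ℝ} (hs : s ≠ 0) : Integrable (gaussianDensity s) := by
  have hb : 0 < 1 / (2 * s ^ 2) := by positivity
  refine ((integrable_exp_neg_mul_sq hb).const_mul (1 / (√(2 * π) * s))).congr ?_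
  filter_upwards with t
  simp only [gaussianDensity]
  ring_nf

theorem integral_Ioi_gaussianDensity_sub {s : ℝ} (hs : 0 < s) (a x : ℝ) :
    ∫ t in Ioi x, gaussianDensity s (t - a) = erfc ((x - a) / (√2 * s)) / 2 := by
  have hk : 0 < (√2 * s)⁻¹ := by positivity
  have hshift := setIntegral_Ioi_comp_add_right (gaussianDensity s) x (-a)
  simp only [← sub_eq_add_neg] at hshift
  have hscale := integral_comp_mul_right_Ioi (fun u => exp (-u ^ 2)) (x - a) hk
  have hexp : ∀ u, exp (-u ^ 2 / (2 * s ^ 2)) = exp (-(u * (√2 * s)⁻¹) ^ 2) := fun u => by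
    congr 1
    field_simp
    rw [sq_sqrt zero_le_two]
  simp only [gaussianDensity, hexp, integral_const_mul] at hshift ⊢
  rw [hshift, hscale, smul_eq_mul, inv_inv, ← div_eq_mul_inv, integral_Ioi_exp_neg_sq,
    sqrt_mul zero_le_two]
  field_simp

theorem exp_neg_div_mul_gaussianDensity_sub {s σ : ℝ} (hs : s ≠ 0) (hσ : σ ≠ 0) (ε t : ℝ) :
    exp (-t / σ) * gaussianDensity s (ε - t) =
      exp (s ^ 2 / (2 * σ ^ 2)) * exp (-ε / σ) * gaussianDensity s (t - (ε - s ^ 2 / σ)) := by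
  simp only [gaussianDensity]
  have hsquare : -t / σ + -(ε - t) ^ 2 / (2 * s ^ 2) =
      s ^ 2 / (2 * σ ^ 2) + -ε / σ + -(t - (ε - s ^ 2 / σ)) ^ 2 / (2 * s ^ 2) := by
    field_simp
    ring
  calc exp (-t / σ) * (1 / (√(2 * π) * s) * exp (-(ε - t) ^ 2 / (2 * s ^ 2)))
      = 1 / (√(2 * π) * s) * exp (-t / σ + -(ε - t) ^ 2 / (2 * s ^ 2)) := by
        rw [exp_add]; ring
    _ = _ := by rw [hsquare, exp_add, exp_add]; ring

theorem integral_Ioi_exp_neg_div_mul_gaussianDensity_sub {s σ : ℝ} (hs : 0 < s) (hσ : σ ≠ 0)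
    (ε : ℝ) :
    ∫ t in Ioi 0, exp (-t / σ) * gaussianDensity s (ε - t) =
      exp (s ^ 2 / (2 * σ ^ 2)) * exp (-ε / σ) * erfc (s / (√2 * σ) - ε / (√2 * s)) / 2 := by
  simp only [exp_neg_div_mul_gaussianDensity_sub hs.ne' hσ, integral_const_mul,
    integral_Ioi_gaussianDensity_sub hs]
  have harg : (0 - (ε - s ^ 2 / σ)) / (√2 * s) = s / (√2 * σ) - ε / (√2 * s) := by
    field_simp
    ring
  rw [harg, mul_div_assoc]

theorem integral_Iic_exp_div_mul_gaussianDensity_sub {s σ : ℝ} (hs : 0 < s) (hσ : σ ≠ 0)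
    (ε : ℝ) :
    ∫ t in Iic 0, exp (t / σ) * gaussianDensity s (ε - t) =
      exp (s ^ 2 / (2 * σ ^ 2)) * exp (ε / σ) * erfc (s / (√2 * σ) + ε / (√2 * s)) / 2 := by
  have hreflect : ∀ t, gaussianDensity s (ε - -t) = gaussianDensity s (-ε - t) := fun t => by
    rw [← gaussianDensity_neg]
    ring_nf
  rw [← neg_zero, ← integral_comp_neg_Ioi]
  simp only [hreflect]
  simpa only [neg_neg, neg_div, sub_neg_eq_add] using
    integral_Ioi_exp_neg_div_mul_gaussianDensity_sub hs hσ (-ε)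

theorem continuous_laplacianDensity (σ : ℝ) : Continuous (laplacianDensity σ) := by
  unfold laplacianDensity
  fun_prop

theorem norm_laplacianDensity_le {σ : ℝ} (hσ : 0 < σ) (t : ℝ) :
    ‖laplacianDensity σ t‖ ≤ 1 / (2 * σ) := by
  have hexp : exp (-|t| / σ) ≤ 1 := exp_le_one_iff.mpr (div_nonpos_of_nonpos_of_nonneg
    (neg_nonpos.mpr (abs_nonneg t)) hσ.le)
  rw [laplacianDensity, norm_of_nonneg (by positivity)]
  exact mul_le_of_le_one_right (by positivity) hexp

theorem laplacianDensity_of_nonneg (σ : ℝ) {t : ℝ} (ht : 0 ≤ t) :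
    laplacianDensity σ t = 1 / (2 * σ) * exp (-t / σ) := by
  rw [laplacianDensity, abs_of_nonneg ht]

theorem laplacianDensity_of_nonpos (σ : ℝ) {t : ℝ} (ht : t ≤ 0) :
    laplacianDensity σ t = 1 / (2 * σ) * exp (t / σ) := by
  rw [laplacianDensity, abs_of_nonpos ht, neg_neg]

/-- Closed form for the Gaussian–Laplacian convolution density:
`(f_L ∗ f_G)(ε) = (1/(4σ_L)) e^{σ_G²/(2σ_L²)} [ e^{−ε/σ_L} erfc(σ_G/(√2σ_L) − ε/(√2σ_G))
+ e^{ε/σ_L} erfc(σ_G/(√2σ_L) + ε/(√2σ_G)) ]`. -/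
theorem gaussian_laplacian_convolution (σG σL : ℝ) (hσG : 0 < σG) (hσL : 0 < σL) (ε : ℝ) :
    (∫ t : ℝ, laplacianDensity σL t * gaussianDensity σG (ε - t)) =
      (1 / (4 * σL)) * Real.exp (σG ^ 2 / (2 * σL ^ 2)) *
        (Real.exp (-ε / σL) *
            erfc (σG / (Real.sqrt 2 * σL) - ε / (Real.sqrt 2 * σG)) +
          Real.exp (ε / σL) *
            erfc (σG / (Real.sqrt 2 * σL) + ε / (Real.sqrt 2 * σG))) := by
  have hint : Integrable fun t => laplacianDensity σL t * gaussianDensity σG (ε - t) :=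
    ((integrable_gaussianDensity hσG.ne').comp_sub_left ε).bdd_mul
      (continuous_laplacianDensity σL).aestronglyMeasurable
      (ae_of_all _ (norm_laplacianDensity_le hσL))
  have hleft : ∫ t in Iic 0, laplacianDensity σL t * gaussianDensity σG (ε - t) =
      1 / (2 * σL) * (exp (σG ^ 2 / (2 * σL ^ 2)) * exp (ε / σL) *
        erfc (σG / (√2 * σL) + ε / (√2 * σG)) / 2) := by
    rw [setIntegral_congr_fun measurableSet_Iic fun t ht => by
      rw [laplacianDensity_of_nonpos σL ht, mul_assoc], integral_const_mul,
      integral_Iic_exp_div_mul_gaussianDensity_sub hσG hσL.ne']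
  have hright : ∫ t in Ioi 0, laplacianDensity σL t * gaussianDensity σG (ε - t) =
      1 / (2 * σL) * (exp (σG ^ 2 / (2 * σL ^ 2)) * exp (-ε / σL) *
        erfc (σG / (√2 * σL) - ε / (√2 * σG)) / 2) := by
    rw [setIntegral_congr_fun measurableSet_Ioi fun t ht => by
      rw [laplacianDensity_of_nonneg σL ht.le, mul_assoc], integral_const_mul,
      integral_Ioi_exp_neg_div_mul_gaussianDensity_sub hσG hσL.ne']
  rw [← intervalIntegral.integral_Iic_add_Ioi hint.integrableOn hint.integrableOn, hleft, hright]
  ring
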